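/- If an even lattice M of signature (n,2) with n ≥ 3 is 2-reflective, then every even overlattice of M is also 2-reflective; equivalently, if M is not 2-reflective, then no finite-index even sublattice of M is 2-reflective. -/

import Mathlib

noncomputable section

open Matrix

/-- An integral lattice of rank `n`, presented by its Gram matrix with respect to
a fixed basis of the underlying free `ℤ`-module. -/
structure IntLat where
  n : ℕ
  gram : Matrix (Fin n) (Fin n) ℤ

namespace IntLat

/-- The integral quadratic form `(v, v)` of a lattice. -/
def qf (L : IntLat) (v : Fin L.n → ℤ) : ℤ := v ⬝ᵥ (L.gram *ᵥ v)

/-- `L` is an even lattice: symmetric, even and nondegenerate. -/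
def IsEvenLat (L : IntLat) : Prop :=
  L.gram.IsSymm ∧ (∀ v : Fin L.n → ℤ, 2 ∣ L.qf v) ∧ L.gram.det ≠ 0

/-- `L` is positive definite. -/
def IsPosDef (L : IntLat) : Prop := ∀ v : Fin L.n → ℤ, v ≠ 0 → 0 < L.qf v

/-- Two lattices are isomorphic (isometric over `ℤ`). -/
def Isomorphic (L₁ L₂ : IntLat) : Prop :=
  ∃ (P : Matrix (Fin L₁.n) (Fin L₂.n) ℤ) (Q : Matrix (Fin L₂.n) (Fin L₁.n) ℤ),
    P * Q = 1 ∧ Q * P = 1 ∧ Pᵀ * L₁.gram * P = L₂.gram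

/-- `L` has signature `(p, q)`: over `ℝ` the form diagonalizes with `p` positive and
`q` negative entries. -/
def HasSig (L : IntLat) (p q : ℕ) : Prop :=
  L.n = p + q ∧
  ∃ P : Matrix (Fin L.n) (Fin L.n) ℝ, IsUnit P.det ∧
    Pᵀ * L.gram.map ((↑) : ℤ → ℝ) * P =
      Matrix.diagonal (fun i : Fin L.n => if (i : ℕ) < p then (1 : ℝ) else -1)

/-- Orthogonal direct sum of two lattices. -/
def dsum (L₁ L₂ : IntLat) : IntLat :=
  ⟨L₁.n + L₂.n, Matrix.reindex finSumFinEquiv finSumFinEquiv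
    (Matrix.fromBlocks L₁.gram 0 0 L₂.gram)⟩

/-- The rescaled lattice `L(a)`. -/
def rescale (L : IntLat) (a : ℤ) : IntLat := ⟨L.n, a • L.gram⟩

/-- The orthogonal direct sum of `m` copies of `L`. -/
def copies : ℕ → IntLat → IntLat
  | 0, _ => ⟨0, 1⟩
  | m + 1, L => dsum L (copies m L)

/-- The dual lattice of `L` rescaled by `a` (an integral lattice whenever `a` times the
inverse Gram matrix is integral, e.g. `D₈'(2)` and `E₆'(3)`). -/
def dualRescale (L : IntLat) (a : ℤ) : IntLat :=
  ⟨L.n, fun i j => ((a : ℚ) * ((L.gram.map ((↑) : ℤ → ℚ))⁻¹ i j)).num⟩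

/-- The even unimodular lattice `U` of signature `(1,1)`. -/
def latU : IntLat := ⟨2, !![0, 1; 1, 0]⟩

/-- The root lattice `Aₙ` (via its Cartan matrix). -/
def latA (n : ℕ) : IntLat :=
  ⟨n, fun i j => if i = j then 2
      else if i.val + 1 = j.val ∨ j.val + 1 = i.val then -1 else 0⟩

/-- The root lattice `Dₙ` (via its Cartan matrix: a chain on nodes `0, …, n-2`
with the node `n-1` attached to node `n-3`). -/
def latD (n : ℕ) : IntLat :=
  ⟨n, fun i j => if i = j then 2
      else if (i.val + 1 = j.val ∨ j.val + 1 = i.val) ∧ i.val + 1 ≠ n ∧ j.val + 1 ≠ n then -1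
      else if (i.val + 3 = n ∧ j.val + 1 = n) ∨ (j.val + 3 = n ∧ i.val + 1 = n) then -1
      else 0⟩

/-- The root lattices `E₆`, `E₇`, `E₈` (via their Cartan matrices: a chain on nodes
`0, …, n-2` with the node `n-1` attached to node `2`). -/
def latE (n : ℕ) : IntLat :=
  ⟨n, fun i j => if i = j then 2
      else if (i.val + 1 = j.val ∨ j.val + 1 = i.val) ∧ i.val + 1 ≠ n ∧ j.val + 1 ≠ n then -1
      else if (i.val = 2 ∧ j.val + 1 = n) ∨ (j.val = 2 ∧ i.val + 1 = n) then -1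
      else 0⟩

/-- The `ℂ`-bilinear extension of the bilinear form of `L` to `M ⊗ ℂ`. -/
def bC (L : IntLat) (Z W : Fin L.n → ℂ) : ℂ :=
  Z ⬝ᵥ ((L.gram.map ((↑) : ℤ → ℂ)) *ᵥ W)

/-- The full affine cone `{Z ∈ M ⊗ ℂ : (Z,Z) = 0, (Z, Z̄) < 0}` (union of the affine
cones over the two connected components of the period domain). -/
def coneSet (L : IntLat) : Set (Fin L.n → ℂ) :=
  {Z | L.bC Z Z = 0 ∧ (L.bC Z (fun i => (starRingEnd ℂ) (Z i))).re < 0}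

/-- `𝒜` is (the affine cone over) a connected component of the period domain. -/
def IsComponent (L : IntLat) (𝒜 : Set (Fin L.n → ℂ)) : Prop :=
  ∃ Z ∈ L.coneSet, 𝒜 = connectedComponentIn L.coneSet Z

/-- Action of an integral matrix on `M ⊗ ℂ`. -/
def act (L : IntLat) (P : Matrix (Fin L.n) (Fin L.n) ℤ) (Z : Fin L.n → ℂ) : Fin L.n → ℂ :=
  (P.map ((↑) : ℤ → ℂ)) *ᵥ Z

/-- The group `O⁺(M)`: integral isometries of `M` preserving the component `𝒜`. -/
def Oplus (L : IntLat) (𝒜 : Set (Fin L.n → ℂ)) : Set (Matrix (Fin L.n) (Fin L.n) ℤ) :=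
  {P | (∃ Q : Matrix (Fin L.n) (Fin L.n) ℤ, P * Q = 1 ∧ Q * P = 1) ∧
    Pᵀ * L.gram * P = L.gram ∧ ∀ Z ∈ 𝒜, L.act P Z ∈ 𝒜}

/-- `Γ` is a finite-index subgroup of `O⁺(M)`. -/
def IsFinIndexSubgroup (L : IntLat) (𝒜 : Set (Fin L.n → ℂ))
    (Γ : Set (Matrix (Fin L.n) (Fin L.n) ℤ)) : Prop :=
  Γ ⊆ L.Oplus 𝒜 ∧ (1 : Matrix (Fin L.n) (Fin L.n) ℤ) ∈ Γ ∧
  (∀ P ∈ Γ, ∀ Q ∈ Γ, P * Q ∈ Γ) ∧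
  (∀ P ∈ Γ, ∀ Q : Matrix (Fin L.n) (Fin L.n) ℤ, P * Q = 1 → Q * P = 1 → Q ∈ Γ) ∧
  ∃ (k : ℕ) (r : Fin k → Matrix (Fin L.n) (Fin L.n) ℤ),
    ∀ g ∈ L.Oplus 𝒜, ∃ i : Fin k, ∃ h ∈ Γ, g = r i * h

/-- A modular form of weight `k` and character `χ` for `Γ` on the component `𝒜`:
a holomorphic function on the affine cone, homogeneous of degree `-k` and
`Γ`-equivariant with character `χ`. -/
def IsModForm (L : IntLat) (𝒜 : Set (Fin L.n → ℂ)) (Γ : Set (Matrix (Fin L.n) (Fin L.n) ℤ))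
    (k : ℤ) (χ : Matrix (Fin L.n) (Fin L.n) ℤ → ℂ) (F : (Fin L.n → ℂ) → ℂ) : Prop :=
  DifferentiableOn ℂ F 𝒜 ∧
  (∀ t : ℂ, t ≠ 0 → ∀ Z ∈ 𝒜, F (t • Z) = t ^ (-k) * F Z) ∧
  (∀ P ∈ Γ, ∀ Z ∈ 𝒜, F (L.act P Z) = χ P * F Z)

/-- A `2`-root of `L`. -/
def IsTwoRoot (L : IntLat) (l : Fin L.n → ℤ) : Prop := L.qf l = 2

/-- `Z` lies on the quadratic divisor `l^⊥`. -/
def orthDiv (L : IntLat) (Z : Fin L.n → ℂ) (l : Fin L.n → ℤ) : Prop :=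
  L.bC Z (fun i => (l i : ℂ)) = 0

/-- A `2`-reflective modular form: non-constant, with zero set contained in the union
of the quadratic divisors orthogonal to `2`-roots. -/
def IsTwoReflForm (L : IntLat) (𝒜 : Set (Fin L.n → ℂ))
    (Γ : Set (Matrix (Fin L.n) (Fin L.n) ℤ)) (k : ℤ)
    (χ : Matrix (Fin L.n) (Fin L.n) ℤ → ℂ) (F : (Fin L.n → ℂ) → ℂ) : Prop :=
  L.IsModForm 𝒜 Γ k χ F ∧
  (¬ ∃ c : ℂ, ∀ Z ∈ 𝒜, F Z = c) ∧
  (∀ Z ∈ 𝒜, F Z = 0 → ∃ l : Fin L.n → ℤ, L.IsTwoRoot l ∧ L.orthDiv Z l)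

/-- The lattice `L` is `2`-reflective: some finite-index subgroup of `O⁺(L)` admits a
`2`-reflective modular form. -/
def IsTwoReflective (L : IntLat) : Prop :=
  ∃ 𝒜, L.IsComponent 𝒜 ∧ ∃ Γ, L.IsFinIndexSubgroup 𝒜 Γ ∧
    ∃ (k : ℤ) (χ : Matrix (Fin L.n) (Fin L.n) ℤ → ℂ) (F : (Fin L.n → ℂ) → ℂ),
      L.IsTwoReflForm 𝒜 Γ k χ F

/-- A complete `2`-reflective modular form: a modular form for the full group `O⁺(L)`
whose zero divisor is the sum with multiplicity one of all quadratic divisors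
orthogonal to `2`-roots (the multiplicity-one condition is expressed by nonvanishing of
the differential at smooth points of the divisor lying on a single quadratic divisor). -/
def IsCompleteTwoReflForm (L : IntLat) (𝒜 : Set (Fin L.n → ℂ)) (k : ℤ)
    (χ : Matrix (Fin L.n) (Fin L.n) ℤ → ℂ) (F : (Fin L.n → ℂ) → ℂ) : Prop :=
  L.IsModForm 𝒜 (L.Oplus 𝒜) k χ F ∧
  (¬ ∃ c : ℂ, ∀ Z ∈ 𝒜, F Z = c) ∧
  (∀ Z ∈ 𝒜, (F Z = 0 ↔ ∃ l : Fin L.n → ℤ, L.IsTwoRoot l ∧ L.orthDiv Z l)) ∧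
  (∀ Z ∈ 𝒜, F Z = 0 →
    (∀ l l' : Fin L.n → ℤ, L.IsTwoRoot l → L.IsTwoRoot l' →
      L.orthDiv Z l → L.orthDiv Z l' → l' = l ∨ l' = -l) →
    fderivWithin ℂ F 𝒜 Z ≠ 0)

/-- The lattice `L` is complete `2`-reflective. -/
def IsCompleteTwoReflective (L : IntLat) : Prop :=
  ∃ 𝒜, L.IsComponent 𝒜 ∧ ∃ (k : ℤ) (χ : Matrix (Fin L.n) (Fin L.n) ℤ → ℂ)
    (F : (Fin L.n → ℂ) → ℂ), L.IsCompleteTwoReflForm 𝒜 k χ F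

/-- The discriminant group `A_L = L'/L ≅ ℤⁿ / (gram L) ℤⁿ`. -/
def discGroup (L : IntLat) : Type :=
  (Fin L.n → ℤ) ⧸ LinearMap.range (Matrix.toLin' L.gram)

instance (L : IntLat) : AddCommGroup L.discGroup :=
  inferInstanceAs (AddCommGroup ((Fin L.n → ℤ) ⧸ LinearMap.range (Matrix.toLin' L.gram)))

instance (L : IntLat) : Module ℤ L.discGroup :=
  inferInstanceAs (Module ℤ ((Fin L.n → ℤ) ⧸ LinearMap.range (Matrix.toLin' L.gram)))

/-- The length `l(L)`: the minimal number of generators of the discriminant group. -/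
def latLength (L : IntLat) : ℕ :=
  sInf {k : ℕ | ∃ f : Fin k → L.discGroup, Submodule.span ℤ (Set.range f) = ⊤}

/-- The exponent `e(L)`: the maximal order of an element of the discriminant group. -/
def latExponent (L : IntLat) : ℕ := AddMonoid.exponent L.discGroup

/-- The `p`-primary component of the discriminant group. -/
def primaryPart (L : IntLat) (p : ℕ) : Submodule ℤ L.discGroup where
  carrier := {x | ∃ m : ℕ, ((p : ℤ) ^ m) • x = 0}
  zero_mem' := ⟨0, smul_zero _⟩
  add_mem' := by
    intro x y hx hy
    obtain ⟨a, ha⟩ := hx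
    obtain ⟨b, hb⟩ := hy
    refine ⟨a + b, ?_⟩
    have hx' : ((p : ℤ) ^ (a + b)) • x = 0 := by
      have h : ((p : ℤ) ^ (a + b)) = (p : ℤ) ^ b * (p : ℤ) ^ a := by ring
      rw [h, mul_smul, ha, smul_zero]
    have hy' : ((p : ℤ) ^ (a + b)) • y = 0 := by
      have h : ((p : ℤ) ^ (a + b)) = (p : ℤ) ^ a * (p : ℤ) ^ b := by ring
      rw [h, mul_smul, hb, smul_zero]
    rw [smul_add, hx', hy', add_zero]
  smul_mem' := by
    intro c x hx
    obtain ⟨m, hm⟩ := hx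
    exact ⟨m, by rw [smul_smul, mul_comm, ← smul_smul, hm, smul_zero]⟩

/-- The length `l(A_L)_p` of the `p`-primary part of the discriminant group. -/
def latLengthP (L : IntLat) (p : ℕ) : ℕ :=
  sInf {k : ℕ | ∃ f : Fin k → L.discGroup,
    Submodule.span ℤ (Set.range f) = L.primaryPart p}

/-- `N` is an even overlattice of `M`: `M` embeds isometrically into the even lattice `N`
with finite index (automatically `M ⊆ N ⊆ M'`). -/
def IsEvenOverlattice (N M : IntLat) : Prop :=
  IsEvenLat N ∧ N.n = M.n ∧ ∃ S : Matrix (Fin N.n) (Fin M.n) ℤ, Sᵀ * N.gram * S = M.gram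

/-- `M` is a maximal even lattice: every even overlattice of `M` is `M` itself. -/
def IsMaximalEven (M : IntLat) : Prop :=
  IsEvenLat M ∧ ∀ N : IntLat, IsEvenOverlattice N M → Isomorphic N M

/-- The rational Gram matrix. -/
def gramQ (L : IntLat) : Matrix (Fin L.n) (Fin L.n) ℚ := L.gram.map ((↑) : ℤ → ℚ)

/-- A rational vector with integral entries. -/
def IsIntVec {n : ℕ} (x : Fin n → ℚ) : Prop := ∀ i, ∃ z : ℤ, x i = (z : ℚ)

/-- The `Norm₂` condition: every coset `γ ∈ L'/L` contains a vector of norm at most `2`.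
(Vectors of `L'` are the rational vectors `x` with `(gram L) x` integral.) -/
def Norm2Cond (L : IntLat) : Prop :=
  ∀ x : Fin L.n → ℚ, IsIntVec (L.gramQ *ᵥ x) →
    ∃ z : Fin L.n → ℤ,
      (x + fun i => (z i : ℚ)) ⬝ᵥ (L.gramQ *ᵥ (x + fun i => (z i : ℚ))) ≤ 2

/-- `Λ` is a Leech lattice: even unimodular positive definite of rank `24` with no
vector of norm `2`. -/
def IsLeech (Λ : IntLat) : Prop :=
  Λ.n = 24 ∧ IsEvenLat Λ ∧ IsPosDef Λ ∧ Λ.gram.det = 1 ∧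
    ¬ ∃ v : Fin Λ.n → ℤ, Λ.qf v = 2

/-- `L` is a primitive sublattice of `Λ`: there is an isometric embedding `Λ ⊇ L`
whose image is a direct summand of `Λ` (equivalently, `Λ/L` is torsion-free). -/
def IsPrimitiveSublatticeOf (L Λ : IntLat) : Prop :=
  ∃ S : Matrix (Fin Λ.n) (Fin L.n) ℤ,
    Sᵀ * Λ.gram * S = L.gram ∧ ∃ T : Matrix (Fin L.n) (Fin Λ.n) ℤ, T * S = 1

/-- Two lattices lie in the same genus: their quadratic forms are equivalent over `ℝ`
and over `ℤ_p` for every prime `p`. -/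
def SameGenus (L₁ L₂ : IntLat) : Prop :=
  (∃ P : Matrix (Fin L₁.n) (Fin L₂.n) ℝ,
      (∃ Q : Matrix (Fin L₂.n) (Fin L₁.n) ℝ, P * Q = 1 ∧ Q * P = 1) ∧
      Pᵀ * L₁.gram.map ((↑) : ℤ → ℝ) * P = L₂.gram.map ((↑) : ℤ → ℝ)) ∧
  ∀ (p : ℕ) (hp : Fact (Nat.Prime p)),
    ∃ P : Matrix (Fin L₁.n) (Fin L₂.n) (@PadicInt p hp),
      (∃ Q : Matrix (Fin L₂.n) (Fin L₁.n) (@PadicInt p hp), P * Q = 1 ∧ Q * P = 1) ∧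
      Pᵀ * L₁.gram.map ((↑) : ℤ → @PadicInt p hp) * P =
        L₂.gram.map ((↑) : ℤ → @PadicInt p hp)

/-- `P` acts trivially on the discriminant group `M'/M`: `P x - x ∈ M` for all `x ∈ M'`. -/
def InDiscKernel (L : IntLat) (P : Matrix (Fin L.n) (Fin L.n) ℤ) : Prop :=
  ∀ x : Fin L.n → ℚ, IsIntVec (L.gramQ *ᵥ x) →
    IsIntVec ((P.map ((↑) : ℤ → ℚ)) *ᵥ x - x)

/-- The discriminant kernel `Õ⁺(M) ≤ O⁺(M)`. -/
def DiscKernel (L : IntLat) (𝒜 : Set (Fin L.n → ℂ)) : Set (Matrix (Fin L.n) (Fin L.n) ℤ) :=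
  {P | P ∈ L.Oplus 𝒜 ∧ L.InDiscKernel P}

end IntLat

infixl:65 " ⊕ᵈ " => IntLat.dsum

open IntLat

/-! An isometric embedding `S : M → N` of lattices of equal rank becomes an isomorphism
`M ⊗ ℂ ≅ N ⊗ ℂ` carrying the period domain of `M` onto that of `N`, components onto
components, and `2`-roots `l` of `M` to `2`-roots `S l` of `N` with `S (l^⊥) = (S l)^⊥`.
A `2`-reflective form `F` for `Γ ≤ O⁺(M)` therefore gives the `2`-reflective form `F ∘ S⁻¹`
for `Γ_N = {g ∈ O⁺(N) : S⁻¹ g S ∈ Γ}`. This group has finite index in `O⁺(N)`: if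
`g ≡ 1 mod det S` then `S⁻¹ g S = 1 + adj(S) ((g - 1) / det S) S` is integral, so the principal
congruence subgroup of level `det S` of `O⁺(N)` is conjugated by `S` into `O⁺(M)`, and the
preimage of `Γ` has finite index in it. -/

namespace Matrix

lemma mulVec_dotProduct_mul_mulVec {n R : Type*} [Fintype n] [CommSemiring R]
    (S G : Matrix n n R) (v w : n → R) :
    (S *ᵥ v) ⬝ᵥ (G *ᵥ (S *ᵥ w)) = v ⬝ᵥ ((Sᵀ * G * S) *ᵥ w) := by
  rw [mulVec_mulVec, dotProduct_mulVec, ← vecMul_transpose, vecMul_vecMul,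
    ← dotProduct_mulVec, ← Matrix.mul_assoc]

variable {n R : Type*} [Fintype n] [DecidableEq n]

lemma mul_left_cancel_of_det_ne_zero [CommRing R] [IsDomain R] {S X Y : Matrix n n R}
    (hS : S.det ≠ 0) (h : S * X = S * Y) : X = Y := by
  have := congrArg (S.adjugate * ·) h
  simp only [← Matrix.mul_assoc, adjugate_mul, smul_mul, Matrix.one_mul] at this
  exact smul_right_injective _ hS this

lemma exists_mul_eq_mul_of_dvd [CommRing R] {S g : Matrix n n R}
    (hg : ∀ i j, S.det ∣ (g - 1) i j) : ∃ Q, g * S = S * Q := by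
  choose K hK using hg
  have hgK : g - 1 = S.det • Matrix.of K := by
    ext i j
    simp [hK]
  refine ⟨1 + S.adjugate * Matrix.of K * S, ?_⟩
  rw [Matrix.mul_add, Matrix.mul_one, ← Matrix.mul_assoc, ← Matrix.mul_assoc, mul_adjugate,
    smul_mul, Matrix.one_mul, ← hgK, Matrix.sub_mul, Matrix.one_mul]
  abel

lemma dvd_sub_one_of_mem_ker {d : ℕ} {g : GL n ℤ}
    (hg : g ∈ (GeneralLinearGroup.map (n := n) (Int.castRingHom (ZMod d))).ker) (i j : n) :
    (d : ℤ) ∣ ((g : Matrix n n ℤ) - 1) i j := by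
  have hgij := congrArg (fun u : GL n (ZMod d) => (u : Matrix n n (ZMod d)) i j)
    (MonoidHom.mem_ker.1 hg)
  refine (ZMod.intCast_zmod_eq_zero_iff_dvd _ d).1 ?_
  simp only [GeneralLinearGroup.map_apply, Units.val_one, eq_intCast] at hgij
  rw [Matrix.sub_apply, Int.cast_sub, hgij, Matrix.one_apply, Matrix.one_apply]
  split_ifs <;> simp

lemma exists_unit_mul_eq_mul_of_mem_ker {S : Matrix n n ℤ} (hS : S.det ≠ 0) {g : GL n ℤ}
    (hg : g ∈ (GeneralLinearGroup.map (n := n) (Int.castRingHom (ZMod S.det.natAbs))).ker) :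
    ∃ Q : GL n ℤ, (g : Matrix n n ℤ) * S = S * Q := by
  have hconj : ∀ a ∈ (GeneralLinearGroup.map (n := n) (Int.castRingHom (ZMod S.det.natAbs))).ker,
      ∃ P, (a : Matrix n n ℤ) * S = S * P := fun a ha =>
    exists_mul_eq_mul_of_dvd fun i j => Int.natAbs_dvd.1 (dvd_sub_one_of_mem_ker ha i j)
  obtain ⟨Q, hQ⟩ := hconj g hg
  obtain ⟨Q', hQ'⟩ := hconj g⁻¹ (inv_mem hg)
  have hinv : ∀ {a b : GL n ℤ} {P P' : Matrix n n ℤ}, a * b = 1 →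
      (a : Matrix n n ℤ) * S = S * P → (b : Matrix n n ℤ) * S = S * P' → P * P' = 1 :=
    fun hab hP hP' => mul_left_cancel_of_det_ne_zero hS <| by
      rw [← Matrix.mul_assoc, ← hP, Matrix.mul_assoc, ← hP', ← Matrix.mul_assoc, ← Units.val_mul,
        hab, Units.val_one, Matrix.one_mul, Matrix.mul_one]
  exact ⟨⟨Q, Q', hinv (mul_inv_cancel g) hQ hQ', hinv (inv_mul_cancel g) hQ' hQ⟩, hQ⟩

end Matrix

namespace Subgroup

lemma relIndex_ne_zero_of_forall_exists_val_eq_mul {M ι : Type*} [Monoid M] [Finite ι]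
    {H K : Subgroup Mˣ} (r : ι → M) (hr : ∀ g ∈ K, ∃ i, ∃ h ∈ H, (g : M) = r i * h) :
    H.relIndex K ≠ 0 := by
  choose i h hH hr using fun g : K => hr g g.2
  have : Finite (K ⧸ H.subgroupOf K) := by
    refine Finite.of_injective (fun q => i q.out) fun q q' hqq' => ?_
    rw [← q.out_eq', ← q'.out_eq', QuotientGroup.eq, mem_subgroupOf]
    have hval : (q.out : Mˣ) * (h q.out)⁻¹ = q'.out * (h q'.out)⁻¹ := by
      ext
      simp only [Units.val_mul, hr, hqq', mul_assoc, Units.mul_inv, mul_one]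
    have : ((q.out : Mˣ))⁻¹ * q'.out = (h q.out)⁻¹ * h q'.out := by
      rw [inv_mul_eq_iff_eq_mul, ← mul_assoc, hval, inv_mul_cancel_right]
    simpa only [coe_mul, coe_inv, this] using mul_mem (inv_mem (hH q.out)) (hH q'.out)
  exact index_ne_zero_of_finite

lemma exists_forall_exists_eq_mul_of_relIndex_ne_zero {G : Type*} [Group G]
    {H K : Subgroup G} (hHK : H.relIndex K ≠ 0) :
    ∃ (k : ℕ) (r : Fin k → G), ∀ g ∈ K, ∃ i, ∃ h ∈ H, g = r i * h := by
  have : (H.subgroupOf K).FiniteIndex := ⟨hHK⟩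
  let e := Finite.equivFin (K ⧸ H.subgroupOf K)
  refine ⟨_, fun i => ((e.symm i).out : G), fun g hg => ?_⟩
  obtain ⟨h, hh⟩ := QuotientGroup.mk_out_eq_mul (H.subgroupOf K) ⟨g, hg⟩
  refine ⟨e (QuotientGroup.mk ⟨g, hg⟩), ((h : K)⁻¹ : G), inv_mem h.2, ?_⟩
  dsimp only
  rw [e.symm_apply_apply, hh]
  simp

lemma relIndex_comap_inf_ne_zero {G G' : Type*} [Group G] [Group G'] (f : G →* G')
    {H O : Subgroup G'} {K P : Subgroup G} (hHO : H.relIndex O ≠ 0) (hKP : K.relIndex P ≠ 0)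
    (hle : K ⊓ P ≤ O.comap f) : (H.comap f ⊓ P).relIndex P ≠ 0 := by
  have hH : (H.comap f).relIndex (K ⊓ P) ≠ 0 :=
    mt (relIndex_eq_zero_of_le_right hle) (relIndex_comap_ne_zero f hHO)
  rw [inf_relIndex_right]
  exact relIndex_ne_zero_trans hH (by rwa [inf_relIndex_right])

end Subgroup

namespace IntLat

variable {m : ℕ}

abbrev complexify : Matrix (Fin m) (Fin m) ℤ →+* Matrix (Fin m) (Fin m) ℂ :=
  (Int.castRingHom ℂ).mapMatrix

lemma act_eq_mulVec (L : IntLat) (P : Matrix (Fin L.n) (Fin L.n) ℤ) (Z : Fin L.n → ℂ) :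
    L.act P Z = complexify P *ᵥ Z := rfl

lemma bC_eq_dotProduct (L : IntLat) (Z W : Fin L.n → ℂ) :
    L.bC Z W = Z ⬝ᵥ (complexify L.gram *ᵥ W) := rfl

lemma star_complexify_mulVec (P : Matrix (Fin m) (Fin m) ℤ) (Z : Fin m → ℂ) :
    (fun i => starRingEnd ℂ ((complexify P *ᵥ Z) i)) =
      complexify P *ᵥ fun i => starRingEnd ℂ (Z i) := by
  ext i
  simp [mulVec, dotProduct, map_sum]

def mulVecEquiv (u : GL (Fin m) ℂ) : (Fin m → ℂ) ≃L[ℂ] (Fin m → ℂ) :=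
  (GeneralLinearGroup.toLin u).toLinearEquiv.toContinuousLinearEquiv

lemma mulVecEquiv_apply (u : GL (Fin m) ℂ) (Z : Fin m → ℂ) :
    mulVecEquiv u Z = (u : Matrix (Fin m) (Fin m) ℂ) *ᵥ Z := rfl

def complexUnit (S : Matrix (Fin m) (Fin m) ℤ) (hS : S.det ≠ 0) : GL (Fin m) ℂ :=
  GeneralLinearGroup.mkOfDetNeZero (complexify S) (by
    rw [← RingHom.map_det, eq_intCast]
    exact_mod_cast hS)

lemma coe_complexUnit (S : Matrix (Fin m) (Fin m) ℤ) (hS : S.det ≠ 0) :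
    (complexUnit S hS : Matrix (Fin m) (Fin m) ℂ) = complexify S := rfl

section Transport

variable {A B S : Matrix (Fin m) (Fin m) ℤ}

lemma qf_mulVec (hS : Sᵀ * B * S = A) (v : Fin m → ℤ) :
    qf ⟨m, B⟩ (S *ᵥ v) = qf ⟨m, A⟩ v := by
  simp only [qf, mulVec_dotProduct_mul_mulVec, hS]

lemma bC_mulVec (hS : Sᵀ * B * S = A) (Z W : Fin m → ℂ) :
    bC ⟨m, B⟩ (complexify S *ᵥ Z) (complexify S *ᵥ W) = bC ⟨m, A⟩ Z W := by
  simp only [bC_eq_dotProduct, mulVec_dotProduct_mul_mulVec, ← hS, map_mul]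
  rfl

lemma complexify_mulVec_mem_coneSet_iff (hS : Sᵀ * B * S = A) (Z : Fin m → ℂ) :
    complexify S *ᵥ Z ∈ coneSet ⟨m, B⟩ ↔ Z ∈ coneSet ⟨m, A⟩ := by
  simp only [coneSet, Set.mem_ofPred_eq, star_complexify_mulVec, bC_mulVec hS]

lemma orthDiv_mulVec (hS : Sᵀ * B * S = A) (Z : Fin m → ℂ) (l : Fin m → ℤ) :
    orthDiv ⟨m, B⟩ (complexify S *ᵥ Z) (S *ᵥ l) ↔ orthDiv ⟨m, A⟩ Z l := by
  have : (fun i => ((S *ᵥ l) i : ℂ)) = complexify S *ᵥ fun i => (l i : ℂ) := by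
    ext i
    simp [mulVec, dotProduct]
  simp only [orthDiv, this, bC_mulVec hS]

lemma complexify_mulVec_of_mul_eq_mul {P Q : Matrix (Fin m) (Fin m) ℤ} (hPQ : P * S = S * Q)
    (W : Fin m → ℂ) :
    complexify P *ᵥ (complexify S *ᵥ W) = complexify S *ᵥ (complexify Q *ᵥ W) := by
  rw [mulVec_mulVec, mulVec_mulVec, ← map_mul, ← map_mul, hPQ]

lemma image_mulVecEquiv_coneSet (hS : Sᵀ * B * S = A) {u : GL (Fin m) ℂ}
    (hu : (u : Matrix (Fin m) (Fin m) ℂ) = complexify S) :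
    mulVecEquiv u '' coneSet ⟨m, A⟩ = coneSet ⟨m, B⟩ := by
  have : coneSet ⟨m, A⟩ = mulVecEquiv u ⁻¹' coneSet ⟨m, B⟩ :=
    Set.ext fun Z => by
      rw [Set.mem_preimage, mulVecEquiv_apply, hu, complexify_mulVec_mem_coneSet_iff hS]
  rw [this, Set.image_preimage_eq _ (mulVecEquiv u).surjective]

end Transport

lemma IsComponent.image_homeomorph {L₁ L₂ : IntLat} {𝒜 : Set (Fin L₁.n → ℂ)}
    (h𝒜 : L₁.IsComponent 𝒜) (e : (Fin L₁.n → ℂ) ≃ₜ (Fin L₂.n → ℂ))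
    (he : e '' L₁.coneSet = L₂.coneSet) : L₂.IsComponent (e '' 𝒜) := by
  obtain ⟨Z, hZ, rfl⟩ := h𝒜
  exact ⟨e Z, he ▸ Set.mem_image_of_mem e hZ, by rw [e.image_connectedComponentIn hZ, he]⟩

lemma IsComponent.eq_of_image_subset {L : IntLat} {𝒜 : Set (Fin L.n → ℂ)}
    (h𝒜 : L.IsComponent 𝒜) (e : (Fin L.n → ℂ) ≃ₜ (Fin L.n → ℂ))
    (he : e '' L.coneSet = L.coneSet) (hsub : e '' 𝒜 ⊆ 𝒜) : e '' 𝒜 = 𝒜 := by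
  obtain ⟨Z, hZ, rfl⟩ := h𝒜
  rw [e.image_connectedComponentIn hZ, he]
  exact connectedComponentIn_eq (hsub ⟨Z, mem_connectedComponentIn hZ, rfl⟩) |>.symm

section Oplus

variable {L : IntLat} {𝒜 : Set (Fin L.n → ℂ)}

lemma act_mul (P Q : Matrix (Fin L.n) (Fin L.n) ℤ) (Z : Fin L.n → ℂ) :
    L.act (P * Q) Z = L.act P (L.act Q Z) := by
  simp only [act_eq_mulVec, map_mul, mulVec_mulVec]

lemma one_mem_Oplus : 1 ∈ L.Oplus 𝒜 :=
  ⟨⟨1, mul_one 1, mul_one 1⟩, by simp, fun Z hZ => by simpa [act_eq_mulVec] using hZ⟩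

lemma mul_mem_Oplus {P Q : Matrix (Fin L.n) (Fin L.n) ℤ} (hP : P ∈ L.Oplus 𝒜)
    (hQ : Q ∈ L.Oplus 𝒜) : P * Q ∈ L.Oplus 𝒜 := by
  obtain ⟨⟨P', hPP', hP'P⟩, hPiso, hP𝒜⟩ := hP
  obtain ⟨⟨Q', hQQ', hQ'Q⟩, hQiso, hQ𝒜⟩ := hQ
  refine ⟨⟨Q' * P', ?_, ?_⟩, ?_, fun Z hZ => act_mul P Q Z ▸ hP𝒜 _ (hQ𝒜 Z hZ)⟩
  · rw [Matrix.mul_assoc, ← Matrix.mul_assoc Q, hQQ', Matrix.one_mul, hPP']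
  · rw [Matrix.mul_assoc, ← Matrix.mul_assoc P', hP'P, Matrix.one_mul, hQ'Q]
  · calc (P * Q)ᵀ * L.gram * (P * Q) = Qᵀ * (Pᵀ * L.gram * P) * Q := by
          rw [transpose_mul]; noncomm_ring
      _ = L.gram := by rw [hPiso, hQiso]

lemma image_act_eq_of_mem_Oplus (h𝒜 : L.IsComponent 𝒜) (g : GL (Fin L.n) ℤ)
    (hg : ↑g ∈ L.Oplus 𝒜) : L.act ↑g '' 𝒜 = 𝒜 :=
  h𝒜.eq_of_image_subset (mulVecEquiv (GeneralLinearGroup.map (Int.castRingHom ℂ) g)).toHomeomorph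
    (image_mulVecEquiv_coneSet (A := L.gram) (B := L.gram) hg.2.1 rfl)
    (Set.image_subset_iff.2 hg.2.2)

lemma inv_mem_Oplus (h𝒜 : L.IsComponent 𝒜) {g : GL (Fin L.n) ℤ} (hg : ↑g ∈ L.Oplus 𝒜) :
    ↑g⁻¹ ∈ L.Oplus 𝒜 := by
  refine ⟨⟨g, g.inv_val, g.val_inv⟩, ?_, fun Z hZ => ?_⟩
  · calc (↑g⁻¹)ᵀ * L.gram * ↑g⁻¹ = (↑g⁻¹)ᵀ * ((↑g)ᵀ * L.gram * ↑g) * ↑g⁻¹ := by rw [hg.2.1]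
      _ = (↑g * ↑g⁻¹)ᵀ * L.gram * (↑g * ↑g⁻¹) := by rw [transpose_mul]; noncomm_ring
      _ = L.gram := by simp
  · rw [← image_act_eq_of_mem_Oplus h𝒜 g hg] at hZ
    obtain ⟨W, hW, rfl⟩ := hZ
    rwa [← act_mul, Units.inv_mul, act_eq_mulVec, map_one, one_mulVec]

def oplusSubgroup (h𝒜 : L.IsComponent 𝒜) : Subgroup (GL (Fin L.n) ℤ) where
  carrier := {g | (g : Matrix (Fin L.n) (Fin L.n) ℤ) ∈ L.Oplus 𝒜}
  one_mem' := one_mem_Oplus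
  mul_mem' ha hb := mul_mem_Oplus ha hb
  inv_mem' hg := inv_mem_Oplus h𝒜 hg

lemma IsFinIndexSubgroup.exists_subgroup (h𝒜 : L.IsComponent 𝒜)
    {Γ : Set (Matrix (Fin L.n) (Fin L.n) ℤ)} (hΓ : L.IsFinIndexSubgroup 𝒜 Γ) :
    ∃ H : Subgroup (GL (Fin L.n) ℤ), H.relIndex (oplusSubgroup h𝒜) ≠ 0 ∧
      ∀ h ∈ H, (h : Matrix (Fin L.n) (Fin L.n) ℤ) ∈ Γ := by
  obtain ⟨hΓO, hone, hmul, hinv, k, r, hr⟩ := hΓ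
  let H : Subgroup (GL (Fin L.n) ℤ) :=
    { carrier := {g | (g : Matrix (Fin L.n) (Fin L.n) ℤ) ∈ Γ}
      one_mem' := hone
      mul_mem' := fun ha hb => hmul _ ha _ hb
      inv_mem' := fun {g} hg => hinv _ hg _ g.val_inv g.inv_val }
  refine ⟨H, Subgroup.relIndex_ne_zero_of_forall_exists_val_eq_mul r fun g hg => ?_,
    fun h hh => hh⟩
  obtain ⟨i, P, hP, hgP⟩ := hr g hg
  obtain ⟨Q, hPQ, hQP⟩ := (hΓO hP).1
  exact ⟨i, ⟨P, Q, hPQ, hQP⟩, hP, hgP⟩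

lemma isFinIndexSubgroup_image (h𝒜 : L.IsComponent 𝒜) {H : Subgroup (GL (Fin L.n) ℤ)}
    (hHO : H ≤ oplusSubgroup h𝒜) (hH : H.relIndex (oplusSubgroup h𝒜) ≠ 0) :
    L.IsFinIndexSubgroup 𝒜 (Units.val '' (H : Set (GL (Fin L.n) ℤ))) := by
  obtain ⟨k, r, hr⟩ := Subgroup.exists_forall_exists_eq_mul_of_relIndex_ne_zero hH
  refine ⟨?_, ⟨1, H.one_mem, rfl⟩, ?_, ?_, k, fun i => r i, fun P hP => ?_⟩
  · rintro _ ⟨g, hg, rfl⟩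
    exact hHO hg
  · rintro _ ⟨a, ha, rfl⟩ _ ⟨b, hb, rfl⟩
    exact ⟨a * b, H.mul_mem ha hb, rfl⟩
  · rintro _ ⟨a, ha, rfl⟩ Q hQ -
    exact ⟨a⁻¹, H.inv_mem ha, a.inv_eq_of_mul_eq_one_right hQ⟩
  · obtain ⟨Q, hPQ, hQP⟩ := hP.1
    obtain ⟨i, h, hh, hPh⟩ := hr ⟨P, Q, hPQ, hQP⟩ hP
    exact ⟨i, h, ⟨h, hh, rfl⟩, congrArg Units.val hPh⟩

end Oplus

def conjBy (S : Matrix (Fin m) (Fin m) ℤ) (hS : S.det ≠ 0) : GL (Fin m) ℤ →* GL (Fin m) ℂ :=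
  (MulAut.conj (complexUnit S hS)⁻¹).toMonoidHom.comp
    (GeneralLinearGroup.map (Int.castRingHom ℂ))

section Overlattice

variable {A B S : Matrix (Fin m) (Fin m) ℤ} {𝒜 : Set (Fin m → ℂ)}

lemma mem_comap_conjBy_map_iff (hS : S.det ≠ 0) {H : Subgroup (GL (Fin m) ℤ)}
    {g : GL (Fin m) ℤ} :
    g ∈ (H.map (GeneralLinearGroup.map (Int.castRingHom ℂ))).comap (conjBy S hS) ↔
      ∃ h ∈ H, (g : Matrix (Fin m) (Fin m) ℤ) * S = S * h := by
  simp only [Subgroup.mem_comap, Subgroup.mem_map]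
  refine exists_congr fun h => and_congr_right fun _ => ?_
  rw [conjBy, MonoidHom.comp_apply, MulEquiv.coe_toMonoidHom, MulAut.conj_apply, inv_inv,
    eq_comm, mul_assoc, inv_mul_eq_iff_eq_mul, Units.ext_iff]
  change complexify (g : Matrix (Fin m) (Fin m) ℤ) * complexify S =
    complexify S * complexify (h : Matrix (Fin m) (Fin m) ℤ) ↔ _
  rw [← map_mul, ← map_mul]
  exact (Matrix.map_injective (f := Int.castRingHom ℂ) Int.cast_injective).eq_iff

lemma IsComponent.image_complexUnit (hS : Sᵀ * B * S = A) (hS₀ : S.det ≠ 0)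
    (h𝒜 : IsComponent ⟨m, A⟩ 𝒜) :
    IsComponent ⟨m, B⟩ (mulVecEquiv (complexUnit S hS₀) '' 𝒜) :=
  h𝒜.image_homeomorph (L₂ := ⟨m, B⟩) (mulVecEquiv _).toHomeomorph
    (image_mulVecEquiv_coneSet hS rfl)

lemma mem_Oplus_of_mul_eq_mul (hS : Sᵀ * B * S = A) (hS₀ : S.det ≠ 0)
    {P : Matrix (Fin m) (Fin m) ℤ} {Q : GL (Fin m) ℤ}
    (hP : P ∈ Oplus ⟨m, B⟩ (mulVecEquiv (complexUnit S hS₀) '' 𝒜)) (hPQ : P * S = S * Q) :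
    (Q : Matrix (Fin m) (Fin m) ℤ) ∈ Oplus ⟨m, A⟩ 𝒜 := by
  refine ⟨⟨↑Q⁻¹, Q.mul_inv, Q.inv_mul⟩, ?_, fun W hW => ?_⟩
  · calc (↑Q)ᵀ * A * ↑Q = (S * ↑Q)ᵀ * B * (S * ↑Q) := by
          rw [← hS, transpose_mul]; noncomm_ring
      _ = Sᵀ * (Pᵀ * B * P) * S := by rw [← hPQ, transpose_mul]; noncomm_ring
      _ = A := by rw [hP.2.1, hS]
  · have hPW := hP.2.2 _ ⟨W, hW, rfl⟩
    rw [act_eq_mulVec, mulVecEquiv_apply, coe_complexUnit, complexify_mulVec_of_mul_eq_mul hPQ,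
      ← coe_complexUnit S hS₀, ← mulVecEquiv_apply] at hPW
    exact (mulVecEquiv _).injective.mem_set_image.1 hPW

lemma ker_inf_oplusSubgroup_le (hS : Sᵀ * B * S = A) (hS₀ : S.det ≠ 0)
    (h𝒜 : IsComponent ⟨m, A⟩ 𝒜) :
    (GeneralLinearGroup.map (Int.castRingHom (ZMod S.det.natAbs))).ker ⊓
        oplusSubgroup (h𝒜.image_complexUnit hS hS₀) ≤
      ((oplusSubgroup h𝒜).map (GeneralLinearGroup.map (Int.castRingHom ℂ))).comap
        (conjBy S hS₀) := by
  rintro g ⟨hg, hgO⟩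
  obtain ⟨Q, hQ⟩ := exists_unit_mul_eq_mul_of_mem_ker hS₀ hg
  exact (mem_comap_conjBy_map_iff hS₀).2 ⟨Q, mem_Oplus_of_mul_eq_mul hS hS₀ hgO hQ, hQ⟩

lemma invFun_mul_left_eq (hS₀ : S.det ≠ 0) {P Q : Matrix (Fin m) (Fin m) ℤ}
    (hPQ : P * S = S * Q) : Function.invFun (S * ·) (P * S) = Q := by
  rw [hPQ]
  exact Function.leftInverse_invFun (fun _ _ => mul_left_cancel_of_det_ne_zero hS₀) Q

lemma IsTwoReflForm.transport (hS : Sᵀ * B * S = A) (hS₀ : S.det ≠ 0)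
    {Γ ΓB : Set (Matrix (Fin m) (Fin m) ℤ)} {k : ℤ} {χ : Matrix (Fin m) (Fin m) ℤ → ℂ}
    {F : (Fin m → ℂ) → ℂ} (hF : IsTwoReflForm ⟨m, A⟩ 𝒜 Γ k χ F)
    (hΓB : ∀ P ∈ ΓB, ∃ Q ∈ Γ, P * S = S * Q) :
    IsTwoReflForm ⟨m, B⟩ (mulVecEquiv (complexUnit S hS₀) '' 𝒜) ΓB k
      (fun P => χ (Function.invFun (S * ·) (P * S)))
      (F ∘ (mulVecEquiv (complexUnit S hS₀)).symm) := by
  obtain ⟨⟨hdiff, hhom, heqv⟩, hnc, hzero⟩ := hF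
  set e := mulVecEquiv (complexUnit S hS₀)
  refine ⟨⟨?_, ?_, ?_⟩, ?_, ?_⟩
  · refine hdiff.comp e.symm.differentiable.differentiableOn ?_
    rintro _ ⟨W, hW, rfl⟩
    simpa using hW
  · rintro t ht _ ⟨W, hW, rfl⟩
    change F (e.symm (t • e W)) = t ^ (-k) * F (e.symm (e W))
    rw [← map_smul, e.symm_apply_apply, e.symm_apply_apply]
    exact hhom t ht W hW
  · rintro P hP _ ⟨W, hW, rfl⟩
    obtain ⟨Q, hQ, hPQ⟩ := hΓB P hP
    have hact : act ⟨m, B⟩ P (e W) = e (act ⟨m, A⟩ Q W) :=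
      complexify_mulVec_of_mul_eq_mul hPQ W
    change F (e.symm (act ⟨m, B⟩ P (e W))) = χ (Function.invFun (S * ·) (P * S)) * F (e.symm (e W))
    rw [hact, e.symm_apply_apply, e.symm_apply_apply, invFun_mul_left_eq hS₀ hPQ]
    exact heqv Q hQ W hW
  · rintro ⟨c, hc⟩
    exact hnc ⟨c, fun W hW => by simpa using hc (e W) ⟨W, hW, rfl⟩⟩
  · rintro _ ⟨W, hW, rfl⟩ hFW
    obtain ⟨l, hl, hWl⟩ := hzero W hW (by simpa using hFW)
    exact ⟨S *ᵥ l, (qf_mulVec hS l).trans hl, (orthDiv_mulVec hS W l).2 hWl⟩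

lemma relIndex_comap_conjBy_inf_ne_zero (hS : Sᵀ * B * S = A) (hS₀ : S.det ≠ 0)
    (h𝒜 : IsComponent ⟨m, A⟩ 𝒜) {H : Subgroup (GL (Fin m) ℤ)}
    (hH : H.relIndex (oplusSubgroup h𝒜) ≠ 0) :
    ((H.map (GeneralLinearGroup.map (Int.castRingHom ℂ))).comap (conjBy S hS₀) ⊓
      oplusSubgroup (h𝒜.image_complexUnit hS hS₀)).relIndex
        (oplusSubgroup (h𝒜.image_complexUnit hS hS₀)) ≠ 0 := by
  have : NeZero S.det.natAbs := ⟨Int.natAbs_ne_zero.2 hS₀⟩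
  refine Subgroup.relIndex_comap_inf_ne_zero _ ?_
    (Subgroup.isFiniteRelIndex_iff_relIndex_ne_zero.1 Subgroup.isFiniteRelIndex_of_finiteIndex)
    (ker_inf_oplusSubgroup_le hS hS₀ h𝒜)
  rwa [Subgroup.relIndex_map_map_of_injective (f := GeneralLinearGroup.map (Int.castRingHom ℂ))
    _ _ (Units.map_injective (Matrix.map_injective Int.cast_injective))]

theorem IsTwoReflective.overlattice (h : IsTwoReflective ⟨m, A⟩) (hA : A.det ≠ 0)
    (hS : Sᵀ * B * S = A) : IsTwoReflective ⟨m, B⟩ := by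
  obtain ⟨𝒜, h𝒜, Γ, hΓ, k, χ, F, hF⟩ := h
  have hS₀ : S.det ≠ 0 := fun h0 => hA (by rw [← hS, det_mul, det_mul, h0, mul_zero])
  obtain ⟨H, hH, hHΓ⟩ := hΓ.exists_subgroup h𝒜
  refine ⟨_, h𝒜.image_complexUnit hS hS₀, _,
    isFinIndexSubgroup_image _ inf_le_right (relIndex_comap_conjBy_inf_ne_zero hS hS₀ h𝒜 hH),
    k, _, _, hF.transport hS hS₀ ?_⟩
  rintro _ ⟨g, hg, rfl⟩
  obtain ⟨h, hh, hgh⟩ := (mem_comap_conjBy_map_iff hS₀).1 hg.1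
  exact ⟨h, hHΓ h hh, hgh⟩

end Overlattice

end IntLat

theorem overlattice_two_reflective_general (M : IntLat)
    (hM : IsEvenLat M) (h : IsTwoReflective M) :
    ∀ N : IntLat, IsEvenOverlattice N M → IsTwoReflective N := by
  rintro ⟨_, B⟩ ⟨-, rfl, S, hS⟩
  exact h.overlattice hM.2.2 hS

/-- **Lemma 2.6 (Ma).** If an even lattice `M` of signature `(n,2)` with `n ≥ 3` is
`2`-reflective, then every even overlattice of `M` is `2`-reflective (equivalently,
if `M` is not `2`-reflective, then no finite-index even sublattice of `M` is). -/
theorem overlattice_two_reflective (M : IntLat) (n : ℕ) (hn : 3 ≤ n)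
    (hM : IsEvenLat M) (hsig : HasSig M n 2) (h : IsTwoReflective M) :
    ∀ N : IntLat, IsEvenOverlattice N M → IsTwoReflective N :=
  overlattice_two_reflective_general M hM h
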